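/- arXiv:2202.05576 — 2 statements merged into one kernel-verified Lean document; each statement's English description precedes it below -/
import Mathlib

section
/- Second law for Markov chains: under the assumptions of Jarzynski's equality, the expected work is bounded below by the free energy difference: ΔF ≤ E[W(X)]. -/
/-!
Jarzynski's equality says that `exp (-β W)` has expectation `exp (-β ΔF)` under the path
distribution of the chain. Jensen's inequality for the convex function `exp` turns this into
`exp (-β E[W]) ≤ exp (-β ΔF)`, that is `ΔF ≤ E[W]`.

Jarzynski's equality is a transfer-matrix computation: weighting the `n`-th step of a path by
`exp (-β (E (n+1) - E n))` at the current state carries `exp (-β E n) / Z₀` to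
`exp (-β E (n+1)) / Z₀` (with `Z₀` the partition function of `E 0`), because the Gibbs vector
of `E (n+1)` is stationary for `M (n+1)`. Summing over the final state leaves `Z_N / Z₀`.
-/

open Finset Matrix Real

section PathSum

variable {S : Type*} [Fintype S]

theorem sum_path_eq_of_mulVec_eq (N : ℕ) (K : ℕ → Matrix S S ℝ) (v : ℕ → S → ℝ)
    (h : ∀ n < N, K n *ᵥ v n = v (n + 1)) :
    ∑ x : Fin (N + 1) → S, v 0 (x 0) * ∏ n : Fin N, K n (x n.succ) (x n.castSucc)
      = ∑ a, v N a := by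
  induction N generalizing K v with
  | zero =>
    simp only [univ_eq_empty, prod_empty, mul_one]
    exact Fintype.sum_equiv (Equiv.funUnique (Fin 1) S) _ _ fun _ => rfl
  | succ N ih =>
    have first_step : ∀ (a : S) (y : Fin (N + 1) → S),
        v 0 ((Fin.cons a y : Fin (N + 2) → S) 0) * ∏ n : Fin (N + 1),
            K n ((Fin.cons a y : Fin (N + 2) → S) n.succ)
              ((Fin.cons a y : Fin (N + 2) → S) n.castSucc)
          = (K 0 (y 0) a * v 0 a) * ∏ n : Fin N, K (n + 1) (y n.succ) (y n.castSucc) := by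
      intro a y
      simp only [Fin.prod_univ_succ, Fin.cons_zero, Fin.cons_succ, Fin.castSucc_zero,
        ← Fin.succ_castSucc, Fin.val_succ, Fin.val_zero]
      ring
    rw [← (Fin.consEquiv fun _ => S).sum_comp, Fintype.sum_prod_type, sum_comm]
    have one_step : ∀ a, ∑ b, K 0 a b * v 0 b = v 1 a := congrFun (h 0 (by omega))
    simp only [Fin.consEquiv_apply, first_step, ← sum_mul, one_step]
    exact ih (fun n => K (n + 1)) (fun n => v (n + 1)) fun n hn => h (n + 1) (by omega)

def propagate (K : ℕ → Matrix S S ℝ) (u : S → ℝ) : ℕ → S → ℝ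
  | 0 => u
  | n + 1 => K n *ᵥ propagate K u n

theorem sum_mulVec_of_sum_col_eq_one {A : Matrix S S ℝ} (hA : ∀ j, ∑ i, A i j = 1)
    (v : S → ℝ) : ∑ i, (A *ᵥ v) i = ∑ i, v i := by
  simp only [mulVec, dotProduct]
  rw [sum_comm]
  simp only [← sum_mul, hA, one_mul]

theorem sum_path_eq_of_sum_col_eq_one (N : ℕ) (K : ℕ → Matrix S S ℝ) (u : S → ℝ)
    (hK : ∀ n < N, ∀ j, ∑ i, K n i j = 1) :
    ∑ x : Fin (N + 1) → S, u (x 0) * ∏ n : Fin N, K n (x n.succ) (x n.castSucc)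
      = ∑ a, u a := by
  refine (sum_path_eq_of_mulVec_eq N K (propagate K u) fun _ _ => rfl).trans ?_
  induction N with
  | zero => rfl
  | succ N ih =>
    rw [propagate, sum_mulVec_of_sum_col_eq_one (hK N (by omega)),
      ih fun n hn => hK n (by omega)]

end PathSum

theorem le_sum_mul_of_sum_mul_exp_eq {ι : Type*} [Fintype ι] {μ W : ι → ℝ} {β ΔF : ℝ}
    (hβ : 0 < β) (hμ : ∀ i, 0 ≤ μ i) (hμ1 : ∑ i, μ i = 1)
    (hJ : ∑ i, μ i * exp (-β * W i) = exp (-β * ΔF)) :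
    ΔF ≤ ∑ i, μ i * W i := by
  have jensen : exp (∑ i, μ i * (-β * W i)) ≤ ∑ i, μ i * exp (-β * W i) :=
    convexOn_exp.map_sum_le (fun i _ => hμ i) hμ1 fun _ _ => Set.mem_univ _
  rw [hJ, exp_le_exp] at jensen
  have linear : ∑ i, μ i * (-β * W i) = -β * ∑ i, μ i * W i := by
    rw [mul_sum]; exact sum_congr rfl fun _ _ => by ring
  rw [linear] at jensen
  exact (mul_le_mul_iff_of_pos_left hβ).1 (by linarith)

noncomputable section MarkovChain

variable {S : Type*}

def partitionFn [Fintype S] (β : ℝ) (E : S → ℝ) : ℝ := ∑ y, exp (-β * E y)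

def freeEnergy [Fintype S] (β : ℝ) (E : S → ℝ) : ℝ := -(1 / β) * log (partitionFn β E)

/- The `n`-th jump (`1 ≤ n ≤ N`) goes from `x (n - 1)` to `x n` with probability
`M n (x n) (x (n - 1))`, so the columns of `M n` sum to `1`. Just before it the energy is switched
from `E (n - 1)` to `E n`, which costs the work `E n - E (n - 1)` at `x (n - 1)`. -/
def pathProb (p₀ : S → ℝ) (M : ℕ → Matrix S S ℝ) {N : ℕ} (x : Fin (N + 1) → S) : ℝ :=
  p₀ (x 0) * ∏ n : Fin N, M (n + 1) (x n.succ) (x n.castSucc)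

def work (E : ℕ → S → ℝ) {N : ℕ} (x : Fin (N + 1) → S) : ℝ :=
  ∑ n : Fin N, (E (n + 1) (x n.castSucc) - E n (x n.castSucc))

theorem partitionFn_pos [Fintype S] [Nonempty S] (β : ℝ) (E : S → ℝ) : 0 < partitionFn β E :=
  sum_pos (fun _ _ => exp_pos _) univ_nonempty

theorem exp_neg_mul_freeEnergy [Fintype S] [Nonempty S] {β : ℝ} (hβ : β ≠ 0) (E : S → ℝ) :
    exp (-β * freeEnergy β E) = partitionFn β E := by
  rw [freeEnergy, show -β * (-(1 / β) * log (partitionFn β E)) = log (partitionFn β E) by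
    field_simp, exp_log (partitionFn_pos β E)]

theorem pathProb_nonneg {p₀ : S → ℝ} {M : ℕ → Matrix S S ℝ} {N : ℕ} (hp₀ : ∀ x, 0 ≤ p₀ x)
    (hM : ∀ n, 1 ≤ n → n ≤ N → ∀ x y, 0 ≤ M n x y) (x : Fin (N + 1) → S) :
    0 ≤ pathProb p₀ M x :=
  mul_nonneg (hp₀ _) (prod_nonneg fun n _ => hM (n + 1) (by omega) (by omega) _ _)

theorem sum_pathProb [Fintype S] {p₀ : S → ℝ} {M : ℕ → Matrix S S ℝ} {N : ℕ}
    (hM : ∀ n, 1 ≤ n → n ≤ N → ∀ y, ∑ x, M n x y = 1) :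
    ∑ x : Fin (N + 1) → S, pathProb p₀ M x = ∑ x, p₀ x :=
  sum_path_eq_of_sum_col_eq_one N (fun n => M (n + 1)) p₀ fun n hn => hM (n + 1) (by omega) hn

theorem jarzynski [Fintype S] [Nonempty S] {β : ℝ} (hβ : β ≠ 0) {N : ℕ} {M : ℕ → Matrix S S ℝ}
    {p E : ℕ → S → ℝ}
    (hstat : ∀ n, 1 ≤ n → n ≤ N → ∀ x, ∑ y, M n x y * p n y = p n x)
    (hE : ∀ n ≤ N, ∀ x, p n x = exp (-β * E n x) / ∑ y, exp (-β * E n y)) :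
    ∑ x : Fin (N + 1) → S, pathProb (p 0) M x * exp (-β * work E x)
      = exp (-β * (freeEnergy β (E N) - freeEnergy β (E 0))) := by
  set Z := fun n => partitionFn β (E n)
  have gibbs : ∀ n ≤ N, ∀ x, exp (-β * E n x) = p n x * Z n := fun n hn x => by
    rw [hE n hn x]; exact (div_mul_cancel₀ _ (partitionFn_pos β (E n)).ne').symm
  let K : ℕ → Matrix S S ℝ := fun n a b => M (n + 1) a b * exp (-β * (E (n + 1) b - E n b))
  let v : ℕ → S → ℝ := fun n b => exp (-β * E n b) / Z 0
  have forward : ∀ n < N, K n *ᵥ v n = v (n + 1) := fun n hn => funext fun a => by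
    have tilt : ∀ b, K n a b * v n b = M (n + 1) a b * p (n + 1) b * (Z (n + 1) / Z 0) :=
      fun b => by
        have work_step : exp (-β * (E (n + 1) b - E n b)) * exp (-β * E n b)
            = p (n + 1) b * Z (n + 1) := by
          rw [← exp_add, ← gibbs (n + 1) (by omega)]; ring_nf
        linear_combination (M (n + 1) a b / Z 0) * work_step
    simp only [mulVec, dotProduct, tilt, ← sum_mul, hstat (n + 1) (by omega) (by omega), v]
    rw [gibbs (n + 1) (by omega) a]
    ring
  have weight : ∀ x : Fin (N + 1) → S, pathProb (p 0) M x * exp (-β * work E x)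
      = v 0 (x 0) * ∏ n : Fin N, K n (x n.succ) (x n.castSucc) := fun x => by
    simp only [pathProb, work, K, v, Z, partitionFn, prod_mul_distrib, mul_sum, exp_sum,
      hE 0 (Nat.zero_le N)]
    ring
  rw [sum_congr rfl fun x _ => weight x, sum_path_eq_of_mulVec_eq N K v forward, ← sum_div,
    mul_sub, exp_sub, exp_neg_mul_freeEnergy hβ, exp_neg_mul_freeEnergy hβ]
  rfl

end MarkovChain

theorem stmt_9_general {S : Type*} [Fintype S] [Nonempty S] (N : ℕ)
    (β : ℝ) (hβ : 0 < β)
    (M : ℕ → Matrix S S ℝ) (p : ℕ → S → ℝ) (E : ℕ → S → ℝ)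
    (hp0 : ∀ x, 0 < p 0 x) (hp0sum : ∑ x, p 0 x = 1)
    (hstoch : ∀ n, 1 ≤ n → n ≤ N → (∀ x y, 0 ≤ M n x y) ∧ ∀ y, ∑ x, M n x y = 1)
    (hstat : ∀ n, 1 ≤ n → n ≤ N → ∀ x, ∑ y, M n x y * p n y = p n x)
    (hE : ∀ n ≤ N, ∀ x, p n x = Real.exp (-β * E n x) / ∑ y, Real.exp (-β * E n y)) :
    (-(1 / β) * Real.log (∑ y, Real.exp (-β * E N y)))
        - (-(1 / β) * Real.log (∑ y, Real.exp (-β * E 0 y)))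
      ≤ ∑ x : Fin (N + 1) → S,
          (p 0 (x 0) * ∏ n : Fin N, M ((n : ℕ) + 1) (x n.succ) (x n.castSucc)) *
            (∑ n : Fin N, (E ((n : ℕ) + 1) (x n.castSucc) - E (n : ℕ) (x n.castSucc))) := by
  show freeEnergy β (E N) - freeEnergy β (E 0) ≤ ∑ x, pathProb (p 0) M x * work E x
  have hμ1 : ∑ x : Fin (N + 1) → S, pathProb (p 0) M x = 1 :=
    (sum_pathProb fun n h₁ h₂ => (hstoch n h₁ h₂).2).trans hp0sum
  exact le_sum_mul_of_sum_mul_exp_eq hβ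
    (pathProb_nonneg (fun x => (hp0 x).le) fun n h₁ h₂ => (hstoch n h₁ h₂).1) hμ1
    (jarzynski hβ.ne' hstat hE)

/-- Second law for Markov chains: under the assumptions of Jarzynski's
equality, the expected work is bounded below by the free energy difference. -/
theorem stmt_9 {S : Type*} [Fintype S] [DecidableEq S] [Nonempty S] (N : ℕ)
    (β : ℝ) (hβ : 0 < β)
    (M : ℕ → Matrix S S ℝ) (p : ℕ → S → ℝ) (E : ℕ → S → ℝ)
    (hp0 : ∀ x, 0 < p 0 x) (hp0sum : ∑ x, p 0 x = 1)
    (hstoch : ∀ n, 1 ≤ n → n ≤ N → (∀ x y, 0 ≤ M n x y) ∧ ∀ y, ∑ x, M n x y = 1)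
    (hirr : ∀ n, 1 ≤ n → n ≤ N → ∀ x y, ∃ m : ℕ, 1 ≤ m ∧ 0 < ((M n) ^ m) x y)
    (hstat : ∀ n, 1 ≤ n → n ≤ N → ∀ x, ∑ y, M n x y * p n y = p n x)
    (hE : ∀ n ≤ N, ∀ x, p n x = Real.exp (-β * E n x) / ∑ y, Real.exp (-β * E n y)) :
    (-(1 / β) * Real.log (∑ y, Real.exp (-β * E N y)))
        - (-(1 / β) * Real.log (∑ y, Real.exp (-β * E 0 y)))
      ≤ ∑ x : Fin (N + 1) → S,
          (p 0 (x 0) * ∏ n : Fin N, M ((n : ℕ) + 1) (x n.succ) (x n.castSucc)) *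
            (∑ n : Fin N, (E ((n : ℕ) + 1) (x n.castSucc) - E (n : ℕ) (x n.castSucc))) :=
  stmt_9_general N β hβ M p E hp0 hp0sum hstoch hstat hE
end

section
/- Counterexample when p_0 ≠ p_1: there exists a two-step Markov chain X = (X_0, X_1) on the three-element state space S = {A,B,C}, with positive initial distribution, irreducible transition matrix satisfying detailed balance, β = 1, for which Crooks' fluctuation relation P(W_X = w)/P(W_Y = -w) = e^{β(w - ΔF)} fails or is undefined at every work value w: specifically, take p_0 = (a,b,c) with a,b,c > 0, b < c, a+b+c = 1, energies E_0 = (log(1/a), log(1/b), log(1/c)) and E_1 = (log(1/a), log(1/c), log(1/b)); then for the two nonzero work values the ratio is undefined (denominator zero with positive numerator), and at w = 0 the ratio equals a < 1 = e^{βw}. -/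
/-!
Take energies `E₀ = -log p₀` and `E₁ = -log p₁`, so that `p₀` and `p₁` are the Gibbs states
at `β = 1`; both partition functions are `1` and `ΔF = 0`. The reversed chain starts in
the state of its only Hamiltonian, so it performs no work: `P(W_Y = -w)` vanishes for
`w ≠ 0` and is `1` for `w = 0`. At `w = 0` Crooks' relation would force `P(W_X = 0) = 1`,
but the work `log (p₀ x₀ / p₁ x₀)` is nonzero on every state where `p₀` and `p₁` differ.
-/

open Finset Real

namespace Crooks

variable {ι κ : Type*} [Fintype ι] [Fintype κ]

/-- The law of the work `W x₀` of a two-step chain whose path `(x₀, x₁)` has weight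
`p x₀ * q x₁`, i.e. whose transition matrix has all columns equal to `q`. -/
noncomputable def workProb (W : ι → ℝ) (p : ι → ℝ) (q : κ → ℝ) (w : ℝ) : ℝ :=
  ∑ x : ι × κ, if W x.1 = w then p x.1 * q x.2 else 0

noncomputable def freeEnergy (β : ℝ) (E : ι → ℝ) : ℝ :=
  -log (∑ s, exp (-β * E s))

theorem workProb_eq_sum {q : κ → ℝ} (hq : ∑ j, q j = 1) (W p : ι → ℝ) (w : ℝ) :
    workProb W p q w = ∑ i, if W i = w then p i else 0 := by
  rw [workProb, Fintype.sum_prod_type]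
  refine sum_congr rfl fun i _ ↦ ?_
  dsimp only
  split_ifs
  · rw [← mul_sum, hq, mul_one]
  · exact sum_const_zero

theorem freeEnergy_one_log_one_div {p : ι → ℝ} (hp : ∀ i, 0 < p i) (hsum : ∑ i, p i = 1) :
    freeEnergy 1 (fun i ↦ log (1 / p i)) = 0 := by
  have hexp (i : ι) : exp (-1 * log (1 / p i)) = p i := by
    rw [one_div, log_inv, neg_one_mul, neg_neg, exp_log (hp i)]
  simp only [freeEnergy, hexp, hsum, log_one, neg_zero]

theorem log_one_div_sub_log_one_div_eq_zero_iff {x y : ℝ} (hx : 0 < x) (hy : 0 < y) :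
    log (1 / y) - log (1 / x) = 0 ↔ x = y := by
  rw [sub_eq_zero, one_div, one_div, log_inv, log_inv, neg_inj]
  exact ⟨fun h ↦ (log_injOn_pos hx hy h.symm), fun h ↦ h ▸ rfl⟩

theorem workProb_zero_lt_one {p₀ p₁ : ι → ℝ} (hp₀ : ∀ i, 0 < p₀ i) (hp₁ : ∀ i, 0 < p₁ i)
    (hsum₀ : ∑ i, p₀ i = 1) (hne : p₀ ≠ p₁) {q : κ → ℝ} (hq : ∑ j, q j = 1) :
    workProb (fun i ↦ log (1 / p₁ i) - log (1 / p₀ i)) p₀ q 0 < 1 := by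
  obtain ⟨j, hj⟩ := Function.ne_iff.mp hne
  rw [workProb_eq_sum hq]
  refine (sum_lt_sum (fun i _ ↦ ?_) ⟨j, mem_univ j, ?_⟩).trans_eq hsum₀
  · split_ifs
    · exact le_rfl
    · exact (hp₀ i).le
  · rw [if_neg (mt (log_one_div_sub_log_one_div_eq_zero_iff (hp₀ j) (hp₁ j)).mp hj)]
    exact hp₀ j

theorem workProb_self_sub_self {p : ι → ℝ} (hp : ∑ i, p i = 1) {q : κ → ℝ} (hq : ∑ j, q j = 1)
    (E : ι → ℝ) (w : ℝ) :
    workProb (fun i ↦ E i - E i) p q w = if w = 0 then 1 else 0 := by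
  rw [workProb_eq_sum hq]
  simp only [sub_self, eq_comm (a := (0 : ℝ))]
  split_ifs
  · exact hp
  · exact sum_const_zero

theorem crooks_relation_fails {p₀ p₁ : ι → ℝ} (hp₀ : ∀ i, 0 < p₀ i) (hp₁ : ∀ i, 0 < p₁ i)
    (hsum₀ : ∑ i, p₀ i = 1) (hsum₁ : ∑ i, p₁ i = 1) (hne : p₀ ≠ p₁)
    {q q' : κ → ℝ} (hq : ∑ j, q j = 1) (hq' : ∑ j, q' j = 1) (w : ℝ) :
    workProb (fun i ↦ log (1 / p₁ i) - log (1 / p₁ i)) p₁ q' (-w) = 0 ∨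
      workProb (fun i ↦ log (1 / p₁ i) - log (1 / p₀ i)) p₀ q w
        / workProb (fun i ↦ log (1 / p₁ i) - log (1 / p₁ i)) p₁ q' (-w)
        ≠ exp (1 * (w - (freeEnergy 1 (fun i ↦ log (1 / p₁ i))
            - freeEnergy 1 (fun i ↦ log (1 / p₀ i))))) := by
  rw [workProb_self_sub_self hsum₁ hq']
  by_cases hw : w = 0
  · subst hw
    right
    rw [neg_zero, if_pos rfl, div_one, freeEnergy_one_log_one_div hp₀ hsum₀,
      freeEnergy_one_log_one_div hp₁ hsum₁, sub_zero, sub_zero, mul_zero, exp_zero]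
    exact (workProb_zero_lt_one hp₀ hp₁ hsum₀ hne hq).ne
  · exact .inl (if_neg (neg_ne_zero.mpr hw))

end Crooks

open Crooks in
/-- Counterexample when p_0 ≠ p_1: for the two-step Markov chain
X = (X_0, X_1) on S = {A,B,C} with p_0 = (a,b,c) (a,b,c > 0, b < c, a+b+c = 1),
β = 1, energies E_0 = (log(1/a), log(1/b), log(1/c)),
E_1 = (log(1/a), log(1/c), log(1/b)), transition matrix M_1 with all columns equal to
(a,c,b)ᵀ, and Y its time reversal (starting in p_1 = (a,c,b), using M_1, so W_Y ≡ 0),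
Crooks' relation P(W_X = w)/P(W_Y = -w) = e^{β(w - ΔF)} fails or is undefined at every
work value w in the support of W_X. -/
theorem stmt_18 (a b c : ℝ) (ha : 0 < a) (hb : 0 < b) (hc : 0 < c)
    (hbc : b < c) (habc : a + b + c = 1) :
    ∀ w : ℝ,
      -- P(W_X = w): paths (x_0, x_1), work E_1(x_0) - E_0(x_0), measure p_0(x_0) M(x_1,x_0)
      (∑ x : Fin 3 × Fin 3,
        if (![Real.log (1/a), Real.log (1/c), Real.log (1/b)] x.1
            - ![Real.log (1/a), Real.log (1/b), Real.log (1/c)] x.1) = w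
        then ![a, b, c] x.1 * ![a, c, b] x.2
        else 0) ≠ 0 →
      -- P(W_Y = -w): Y starts in p_1 = (a,c,b), its work is Ê_1 - Ê_0 = E_1 - E_1 = 0
      ((∑ y : Fin 3 × Fin 3,
        if (![Real.log (1/a), Real.log (1/c), Real.log (1/b)] y.1
            - ![Real.log (1/a), Real.log (1/c), Real.log (1/b)] y.1) = -w
        then ![a, c, b] y.1 * ![a, c, b] y.2
        else 0) = 0
      ∨
      (∑ x : Fin 3 × Fin 3,
        if (![Real.log (1/a), Real.log (1/c), Real.log (1/b)] x.1
            - ![Real.log (1/a), Real.log (1/b), Real.log (1/c)] x.1) = w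
        then ![a, b, c] x.1 * ![a, c, b] x.2
        else 0)
      / (∑ y : Fin 3 × Fin 3,
        if (![Real.log (1/a), Real.log (1/c), Real.log (1/b)] y.1
            - ![Real.log (1/a), Real.log (1/c), Real.log (1/b)] y.1) = -w
        then ![a, c, b] y.1 * ![a, c, b] y.2
        else 0)
      ≠ Real.exp ((1 : ℝ) * (w -
          ((-Real.log (∑ s : Fin 3,
              Real.exp (-(1 : ℝ) * ![Real.log (1/a), Real.log (1/c), Real.log (1/b)] s)))
            - (-Real.log (∑ s : Fin 3,
              Real.exp (-(1 : ℝ) * ![Real.log (1/a), Real.log (1/b), Real.log (1/c)] s))))))) := by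
  intro w _
  have hE₀ : ![log (1/a), log (1/b), log (1/c)] = fun i ↦ log (1 / ![a, b, c] i) := by
    ext i; fin_cases i <;> rfl
  have hE₁ : ![log (1/a), log (1/c), log (1/b)] = fun i ↦ log (1 / ![a, c, b] i) := by
    ext i; fin_cases i <;> rfl
  have hp₀ : ∀ i, 0 < ![a, b, c] i := by intro i; fin_cases i <;> assumption
  have hp₁ : ∀ i, 0 < ![a, c, b] i := by intro i; fin_cases i <;> assumption
  have hsum₀ : ∑ i, ![a, b, c] i = 1 := by
    rw [Fin.sum_univ_three]; exact habc
  have hsum₁ : ∑ i, ![a, c, b] i = 1 := by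
    rw [Fin.sum_univ_three]; exact (by linarith : a + c + b = 1)
  have hne : ![a, b, c] ≠ ![a, c, b] := fun h ↦ hbc.ne (congrFun h 1)
  rw [hE₀, hE₁]
  exact crooks_relation_fails hp₀ hp₁ hsum₀ hsum₁ hne hsum₁ hsum₁ w
end
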